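/- Define real sequences {b_k}_{k=0}^∞ and {x_k}_{k=0}^∞ by b_0 := 1/2, b_{k+1} := b_k / (2√2/√(b_k) + 4)², and x_0 := 2, x_{k+1} := (x_k² + 1 − b_k)/(2 x_k). Then: (a) b_k > 0 and b_{k+1} ≤ b_k/16 for all k, so b_k → 0; and (b) x_k = 1 + √(2 b_k) for every k = 0,1,2,…, so in particular x_k > 1 for all k. -/

import Mathlib

/-!
Put `s = √(2b)`. Since `2√2/√b = 4/s`, the recursion for `b` says exactly that
`√(2b') = b/(2(1 + s))`, while, because `s² = 2b`, the step `x ↦ (x² + 1 - b)/(2x)` sends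
`1 + s` to `1 + b/(2(1 + s))`. Hence `x = 1 + √(2b)` is preserved. The decay `b' ≤ b/16`
only uses that the denominator of the `b`-recursion is at least `4²`.
-/

open Filter Topology

theorem tendsto_zero_of_le_mul_of_lt_one {u : ℕ → ℝ} {c : ℝ} (hu : ∀ n, 0 ≤ u n)
    (hc₀ : 0 ≤ c) (hc₁ : c < 1) (h : ∀ n, u (n + 1) ≤ c * u n) :
    Tendsto u atTop (𝓝 0) := by
  have hgeom : Tendsto (fun n ↦ c ^ n * u 0) atTop (𝓝 0) := by
    simpa using (tendsto_pow_atTop_nhds_zero_of_lt_one hc₀ hc₁).mul_const (u 0)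
  exact squeeze_zero hu (fun n ↦ le_geom hc₀ n fun k _ ↦ h k) hgeom

theorem div_sq_add_four_le {b c : ℝ} (hb : 0 ≤ b) (hc : 0 ≤ c) :
    b / (c + 4) ^ 2 ≤ b / 16 := by
  gcongr
  nlinarith

theorem two_mul_sqrt_two_div_sqrt {b : ℝ} (hb : 0 < b) :
    2 * √2 / √b = 4 / √(2 * b) := by
  have hsb : 0 < √b := Real.sqrt_pos.mpr hb
  rw [Real.sqrt_mul zero_le_two, div_eq_div_iff hsb.ne' (by positivity)]
  linear_combination 2 * √b * Real.mul_self_sqrt zero_le_two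

theorem sqrt_two_mul_div_sq {b : ℝ} (hb : 0 < b) :
    √(2 * (b / (2 * √2 / √b + 4) ^ 2)) = b / (2 * (1 + √(2 * b))) := by
  set s := √(2 * b)
  have hs : 0 < s := Real.sqrt_pos.mpr (by positivity)
  have hs2 : s ^ 2 = 2 * b := Real.sq_sqrt (by positivity)
  have hsq : 2 * (b / (4 / s + 4) ^ 2) = (b / (2 * (1 + s))) ^ 2 := by
    field_simp
    linear_combination 8 * hs2
  rw [two_mul_sqrt_two_div_sqrt hb, hsq, Real.sqrt_sq (by positivity)]

theorem newton_step_one_add {s b : ℝ} (hs : 0 ≤ s) (hs2 : s ^ 2 = 2 * b) :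
    ((1 + s) ^ 2 + 1 - b) / (2 * (1 + s)) = 1 + b / (2 * (1 + s)) := by
  field_simp
  linear_combination hs2

/-- The auxiliary sequences from the counterexample: `b₀ = 1/2`,
`b_{k+1} = b_k/(2√2/√b_k + 4)²`, `x₀ = 2`, `x_{k+1} = (x_k² + 1 − b_k)/(2x_k)`.
Then `b_k > 0`, `b_{k+1} ≤ b_k/16`, `b_k → 0`, and `x_k = 1 + √(2b_k) > 1` for all `k`. -/
theorem stmt19 (b x : ℕ → ℝ)
    (hb0 : b 0 = 1 / 2)
    (hbrec : ∀ k, b (k + 1) = b k / (2 * Real.sqrt 2 / Real.sqrt (b k) + 4) ^ 2)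
    (hx0 : x 0 = 2)
    (hxrec : ∀ k, x (k + 1) = (x k ^ 2 + 1 - b k) / (2 * x k)) :
    (∀ k, 0 < b k ∧ b (k + 1) ≤ b k / 16) ∧
      Filter.Tendsto b Filter.atTop (nhds 0) ∧
      (∀ k, x k = 1 + Real.sqrt (2 * b k)) ∧
      (∀ k, 1 < x k) := by
  have hpos : ∀ k, 0 < b k := by
    intro k
    induction k with
    | zero => rw [hb0]; norm_num
    | succ k ih => rw [hbrec]; positivity
  have hdecay : ∀ k, b (k + 1) ≤ b k / 16 := fun k ↦ by
    rw [hbrec]; exact div_sq_add_four_le (hpos k).le (by positivity)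
  have hx : ∀ k, x k = 1 + √(2 * b k) := by
    intro k
    induction k with
    | zero => rw [hx0, hb0]; norm_num
    | succ k ih =>
      rw [hxrec, ih, newton_step_one_add (Real.sqrt_nonneg _) (Real.sq_sqrt (by linarith [hpos k])),
        hbrec, sqrt_two_mul_div_sq (hpos k)]
  refine ⟨fun k ↦ ⟨hpos k, hdecay k⟩, ?_, hx, fun k ↦ ?_⟩
  · exact tendsto_zero_of_le_mul_of_lt_one (fun k ↦ (hpos k).le) (by norm_num) (by norm_num)
      fun k ↦ (hdecay k).trans_eq (div_eq_inv_mul _ _)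
  · rw [hx k]
    linarith [Real.sqrt_pos.mpr (by linarith [hpos k] : 0 < 2 * b k)]
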